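/- For every integer n ≥ 1, Z_n ≥ 1/sqrt(2) · 1/sqrt(n), where Z_n := (1/n!) · Σ_{σ ∈ S_n} 2^{-c(σ)}. -/

import Mathlib

open scoped BigOperators

/-- `Z_n = (1/n!) · Σ_{σ ∈ S_n} 2^{-c(σ)}`, where `c(σ)` is the number of cycles of `σ`
of length greater than one (the cardinality of the cycle type of `σ`). -/
noncomputable def Zseq (n : ℕ) : ℝ :=
  (Nat.factorial n : ℝ)⁻¹ *
    ∑ σ : Equiv.Perm (Fin n), ((2 : ℝ) ^ σ.cycleType.card)⁻¹

section Aux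

open Equiv Equiv.Perm Finset Real

variable {α : Type*} [Fintype α] [DecidableEq α]


lemma swap_mul_cycleFactors (f : Perm α) {a b : α} (ha : f a = a) (hb : f b ≠ b) :
    (swap a b * f).cycleFactorsFinset
      = insert ((swap a b * f).cycleOf b) (f.cycleFactorsFinset.erase (f.cycleOf b)) := by
  have hab : a ≠ b := by rintro rfl; exact hb ha
  have hfba : f b ≠ a := fun h => hab (f.injective (ha.symm ▸ h : f b = f a)).symm
  set g := swap a b * f with hg
  have hgb : g b = f b := by
    simp only [hg, Perm.mul_apply]
    exact swap_apply_of_ne_of_ne hfba hb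
  have hga : g a = b := by simp [hg, ha]
  have hbsg : b ∈ g.support := by
    rw [Perm.mem_support, hgb]; exact hb
  have hasg : a ∈ g.support := by
    rw [Perm.mem_support, hga]; exact fun h => hab h.symm
  have hanf : a ∉ f.support := by simp [Perm.mem_support, ha]
  have hsame : g.SameCycle a b := ⟨1, by simpa using hga⟩
  have hfg : f = swap a b * g := by rw [hg, ← mul_assoc, swap_mul_self, one_mul]
  ext c
  simp only [Finset.mem_insert, Finset.mem_erase]
  constructor
  · intro hc
    by_cases hbc : b ∈ c.support
    · left
      exact cycle_is_cycleOf hbc hc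
    have hac : a ∉ c.support := by
      intro hac
      have : c = g.cycleOf a := cycle_is_cycleOf hac hc
      rw [this, hsame.cycleOf_eq] at hbc
      exact hbc ((mem_support_cycleOf_iff).2 ⟨Perm.SameCycle.refl g b, hbsg⟩)
    right
    have hcf : c ∈ f.cycleFactorsFinset := by
      rw [mem_cycleFactorsFinset_iff] at hc ⊢
      refine ⟨hc.1, fun x hx => ?_⟩
      have h1 : c x = g x := hc.2 x hx
      have hcx : c x ∈ c.support := (Perm.apply_mem_support (f := c)).2 hx
      have h2 : g x ≠ a := fun h => hac (h ▸ h1 ▸ hcx)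
      have h3 : g x ≠ b := fun h => hbc (h ▸ h1 ▸ hcx)
      have : f x = swap a b (g x) := by rw [hfg]; rfl
      rw [this, swap_apply_of_ne_of_ne h2 h3, h1]
    refine ⟨?_, hcf⟩
    intro hcb
    apply hbc
    rw [hcb]
    exact (mem_support_cycleOf_iff).2 ⟨Perm.SameCycle.refl f b, Perm.mem_support.2 hb⟩
  · rintro (rfl | ⟨hcb, hcf⟩)
    · exact cycleOf_mem_cycleFactorsFinset_iff.2 hbsg
    · have hbc : b ∉ c.support := by
        intro hbc
        exact hcb (cycle_is_cycleOf hbc hcf)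
      rw [mem_cycleFactorsFinset_iff] at hcf ⊢
      refine ⟨hcf.1, fun x hx => ?_⟩
      have h1 : c x = f x := hcf.2 x hx
      have hcx : c x ∈ c.support := (Perm.apply_mem_support (f := c)).2 hx
      have hcxf : c.support ⊆ f.support := mem_cycleFactorsFinset_support_le (mem_cycleFactorsFinset_iff.2 hcf)
      have h2 : f x ≠ a := fun h => hanf (h ▸ h1 ▸ hcxf hcx)
      have h3 : f x ≠ b := fun h => hbc (h ▸ h1 ▸ hcx)
      have : g x = swap a b (f x) := rfl
      rw [this, swap_apply_of_ne_of_ne h2 h3] at *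
      rw [h1]

lemma card_cycleType_swap_mul (f : Perm α) {a b : α} (ha : f a = a) (hb : f b ≠ b) :
    Multiset.card (swap a b * f).cycleType = Multiset.card f.cycleType := by
  have hab : a ≠ b := by rintro rfl; exact hb ha
  have hfba : f b ≠ a := fun h => hab (f.injective (ha.symm ▸ h : f b = f a)).symm
  have key := swap_mul_cycleFactors f ha hb
  have h1 : Multiset.card (Perm.cycleType (swap a b * f)) = (swap a b * f).cycleFactorsFinset.card := by
    simp [Perm.cycleType_def]
  have h2 : Multiset.card f.cycleType = f.cycleFactorsFinset.card := by
    simp [Perm.cycleType_def]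
  rw [h1, h2, key]
  have hmem : f.cycleOf b ∈ f.cycleFactorsFinset :=
    cycleOf_mem_cycleFactorsFinset_iff.2 (Perm.mem_support.2 hb)
  have hnot : (swap a b * f).cycleOf b ∉ f.cycleFactorsFinset.erase (f.cycleOf b) := by
    intro hmem'
    have h3 := Finset.mem_of_mem_erase hmem'
    have h4 : ((swap a b * f).cycleOf b).support ⊆ f.support :=
      mem_cycleFactorsFinset_support_le h3
    have hga : (swap a b * f) a = b := by simp [ha]
    have hsame : (swap a b * f).SameCycle b a := Perm.SameCycle.symm (⟨1, by simpa using hga⟩ : (swap a b * f).SameCycle a b)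
    have hbsg : b ∈ (swap a b * f).support := by
      rw [Perm.mem_support]
      have : (swap a b * f) b = f b := by
        simp only [Perm.mul_apply]; exact swap_apply_of_ne_of_ne hfba hb
      rw [this]; exact hb
    have hasup : a ∈ ((swap a b * f).cycleOf b).support :=
      (mem_support_cycleOf_iff).2 ⟨hsame, hbsg⟩
    have : a ∈ f.support := h4 hasup
    simp [Perm.mem_support, ha] at this
  rw [Finset.card_insert_of_notMem hnot, Finset.card_erase_of_mem hmem]
  have : 1 ≤ f.cycleFactorsFinset.card := Finset.card_pos.2 ⟨_, hmem⟩
  omega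



lemma card_cycleType_swap_mul_of_fixed (f : Perm α) {a b : α} (ha : f a = a) (hb : f b = b)
    (hab : a ≠ b) :
    Multiset.card (swap a b * f).cycleType = Multiset.card f.cycleType + 1 := by
  have hd : Perm.Disjoint (swap a b) f := by
    intro x
    by_cases hx : x = a ∨ x = b
    · right; rcases hx with rfl | rfl <;> assumption
    · left; push_neg at hx; exact swap_apply_of_ne_of_ne hx.1 hx.2
  rw [hd.cycleType_mul]
  have : (swap a b).cycleType = {2} := by
    rw [(isCycle_swap hab).cycleType, card_support_swap hab]
  rw [this]
  simp [add_comm]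

lemma cycleType_permCongr {β : Type*} [Fintype β] [DecidableEq β] (φ : α ≃ β) (e : Perm α) :
    ((φ.permCongr) e).cycleType = e.cycleType := by
  classical
  have h : ∀ x : β, (fun _ : β => True) x := fun _ => trivial
  have heq : (φ.permCongr) e = e.extendDomain (φ.trans (Equiv.subtypeUnivEquiv h).symm) := by
    ext x
    rw [Perm.extendDomain_apply_subtype _ _ (h x)]
    simp [Equiv.subtypeUnivEquiv]
  rw [heq, Perm.cycleType_extendDomain]

lemma cycleType_optionCongr (e : Perm α) :
    Perm.cycleType (Equiv.optionCongr e) = e.cycleType := by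
  classical
  have heq : e.optionCongr
      = e.extendDomain ((Equiv.optionIsSomeEquiv α).symm) := by
    ext x
    cases x with
    | none =>
      rw [Perm.extendDomain_apply_not_subtype]
      · simp
      · simp
    | some a =>
      rw [Perm.extendDomain_apply_subtype]
      · simp [Equiv.optionIsSomeEquiv]
      · simp
  rw [heq, Perm.cycleType_extendDomain]

/-- The basic sum. -/
noncomputable def psum (α : Type*) [Fintype α] [DecidableEq α] : ℝ :=
  ∑ σ : Perm α, ((2 : ℝ) ^ (Multiset.card σ.cycleType))⁻¹

lemma psum_congr {β : Type*} [Fintype β] [DecidableEq β] (φ : α ≃ β) : psum α = psum β := by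
  unfold psum
  refine Fintype.sum_equiv φ.permCongr _ _ (fun e => ?_)
  rw [cycleType_permCongr]

lemma psum_fixing (b : α) :
    ∑ e : Perm α, (if e b = b then ((2:ℝ) ^ (Multiset.card e.cycleType))⁻¹ else 0)
      = psum {a : α // a ≠ b} := by
  classical
  rw [← Finset.sum_filter]
  rw [Finset.sum_subtype (Finset.univ.filter (fun e : Perm α => e b = b))
    (p := fun e : Perm α => ∀ a : α, ¬ a ≠ b → e a = a)
    (f := fun e : Perm α => ((2:ℝ) ^ (Multiset.card e.cycleType))⁻¹)
    (by
      intro e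
      simp only [Finset.mem_filter, Finset.mem_univ, true_and]
      constructor
      · intro he a hab
        push_neg at hab
        subst hab; exact he
      · intro h; exact h b (by simp))]
  unfold psum
  refine (Fintype.sum_equiv (Perm.subtypeEquivSubtypePerm (fun a : α => a ≠ b)) _ _
    (fun e => ?_)).symm
  have : ((Perm.subtypeEquivSubtypePerm (fun a : α => a ≠ b)) e : Perm α) = Perm.ofSubtype e := rfl
  rw [this, Perm.cycleType_ofSubtype]




lemma psum_option_term (e : Perm α) (b : α) :
    ((2:ℝ) ^ (Multiset.card (Perm.decomposeOption.symm (some b, e)).cycleType))⁻¹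
      = if e b = b then (1/2) * ((2:ℝ) ^ (Multiset.card e.cycleType))⁻¹
        else ((2:ℝ) ^ (Multiset.card e.cycleType))⁻¹ := by
  have hde : Perm.decomposeOption.symm (some b, e) = swap none (some b) * e.optionCongr := rfl
  have hfix : (e.optionCongr : Perm (Option α)) none = none := by simp
  by_cases h : e b = b
  · have hb2 : (e.optionCongr : Perm (Option α)) (some b) = some b := by simp [h]
    rw [hde, card_cycleType_swap_mul_of_fixed _ hfix hb2 (by simp), cycleType_optionCongr]
    simp [h, pow_succ]
  · have hb2 : (e.optionCongr : Perm (Option α)) (some b) ≠ some b := by simp [h]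
    rw [hde, card_cycleType_swap_mul _ hfix hb2, cycleType_optionCongr]
    simp [h]

lemma psum_option_none (e : Perm α) :
    ((2:ℝ) ^ (Multiset.card (Perm.decomposeOption.symm (none, e)).cycleType))⁻¹
      = ((2:ℝ) ^ (Multiset.card e.cycleType))⁻¹ := by
  have hde : Perm.decomposeOption.symm (none, e) = swap none none * e.optionCongr := rfl
  rw [hde, swap_self]
  have : (Equiv.refl (Option α) : Perm (Option α)) * e.optionCongr = e.optionCongr :=
    one_mul _
  rw [this, cycleType_optionCongr]

lemma psum_option :
    psum (Option α) = psum α + ∑ b : α, (psum α - (1/2) * psum {a : α // a ≠ b}) := by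
  classical
  have key : psum (Option α)
      = ∑ p : Option α × Perm α,
          ((2:ℝ) ^ (Multiset.card (Perm.decomposeOption.symm p).cycleType))⁻¹ := by
    unfold psum
    exact (Equiv.sum_comp Perm.decomposeOption.symm
      (fun σ => ((2:ℝ) ^ (Multiset.card σ.cycleType))⁻¹)).symm
  rw [key, Fintype.sum_prod_type]
  rw [Fintype.sum_option]
  congr 1
  · unfold psum
    exact Finset.sum_congr rfl (fun e _ => psum_option_none e)
  · refine Finset.sum_congr rfl (fun b _ => ?_)
    have step1 : ∀ e : Perm α,
        ((2:ℝ) ^ (Multiset.card (Perm.decomposeOption.symm (some b, e)).cycleType))⁻¹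
        = ((2:ℝ) ^ (Multiset.card e.cycleType))⁻¹
          - (1/2) * (if e b = b then ((2:ℝ) ^ (Multiset.card e.cycleType))⁻¹ else 0) := by
      intro e
      rw [psum_option_term]
      by_cases h : e b = b <;> simp [h] <;> ring
    rw [Finset.sum_congr rfl (fun e _ => step1 e), Finset.sum_sub_distrib, ← Finset.mul_sum,
      psum_fixing]
    rfl




noncomputable def aseq (n : ℕ) : ℝ := psum (Fin n)

lemma Zseq_eq (n : ℕ) : Zseq n = (Nat.factorial n : ℝ)⁻¹ * aseq n := rfl

lemma aseq_zero : aseq 0 = 1 := by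
  unfold aseq psum
  have h1 : ∀ σ : Perm (Fin 0), Multiset.card σ.cycleType = 0 := fun σ => by
    rw [Perm.card_cycleType_eq_zero]
    ext x
    exact x.elim0
  rw [Finset.sum_congr rfl (fun σ _ => by rw [h1 σ, pow_zero, inv_one])]
  simp

lemma aseq_one : aseq 1 = 1 := by
  unfold aseq psum
  have h1 : ∀ σ : Perm (Fin 1), Multiset.card σ.cycleType = 0 := fun σ => by
    rw [Perm.card_cycleType_eq_zero]
    ext x
    have := Subsingleton.elim (σ x) x
    simp [this]
  rw [Finset.sum_congr rfl (fun σ _ => by rw [h1 σ, pow_zero, inv_one])]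
  simp [Fintype.card_perm]

lemma aseq_rec (n : ℕ) :
    aseq (n+2) = ((n:ℝ)+2) * aseq (n+1) - (((n:ℝ)+1)/2) * aseq n := by
  have h0 : aseq (n+2) = psum (Option (Fin (n+1))) := psum_congr (finSuccEquiv (n+1))
  have hsub : ∀ b : Fin (n+1), psum {a : Fin (n+1) // a ≠ b} = aseq n := by
    intro b
    have hcard : Fintype.card {a : Fin (n+1) // a ≠ b} = n := by
      have := Fintype.card_subtype_compl (fun a : Fin (n+1) => a = b)
      simp only [Fintype.card_subtype_eq, Fintype.card_fin] at this
      simpa using this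
    exact psum_congr (Fintype.equivFinOfCardEq hcard)
  rw [h0, psum_option]
  rw [Finset.sum_congr rfl (fun b _ => by rw [hsub b])]
  rw [Finset.sum_const, Finset.card_univ, Fintype.card_fin]
  unfold aseq
  push_cast
  ring

lemma Zseq_rec (n : ℕ) :
    Zseq (n+2) = Zseq (n+1) - Zseq n / (2*((n:ℝ)+2)) := by
  rw [Zseq_eq, Zseq_eq, Zseq_eq, aseq_rec]
  have hf2 : (Nat.factorial (n+2) : ℝ) = ((n:ℝ)+2) * ((n:ℝ)+1) * (Nat.factorial n : ℝ) := by
    rw [Nat.factorial_succ, Nat.factorial_succ]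
    push_cast
    ring
  have hf1 : (Nat.factorial (n+1) : ℝ) = ((n:ℝ)+1) * (Nat.factorial n : ℝ) := by
    rw [Nat.factorial_succ]; push_cast; ring
  have hne : (Nat.factorial n : ℝ) ≠ 0 := by
    exact_mod_cast Nat.factorial_ne_zero n
  have h2 : ((n:ℝ)+2) ≠ 0 := by positivity
  have h1 : ((n:ℝ)+1) ≠ 0 := by positivity
  rw [hf2, hf1]
  field_simp

lemma Zseq_pos (n : ℕ) : 0 < Zseq n := by
  rw [Zseq_eq]
  apply mul_pos
  · rw [inv_pos]
    exact_mod_cast Nat.factorial_pos n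
  · unfold aseq psum
    apply Finset.sum_pos
    · intro σ _
      positivity
    · exact ⟨1, Finset.mem_univ 1⟩

lemma Zseq_zero : Zseq 0 = 1 := by rw [Zseq_eq, aseq_zero]; simp
lemma Zseq_one : Zseq 1 = 1 := by rw [Zseq_eq, aseq_one]; simp
lemma Zseq_two : Zseq 2 = 3/4 := by
  have := Zseq_rec 0
  rw [Zseq_zero, Zseq_one] at this
  norm_num at this
  convert this using 2 <;> norm_num
lemma Zseq_three : Zseq 3 = 7/12 := by
  have := Zseq_rec 1
  rw [Zseq_two, Zseq_one] at this
  norm_num at this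
  convert this using 2 <;> norm_num



/-- helper: compare via squares -/
lemma le_of_sq_le' {x y : ℝ} (hx : 0 ≤ x) (hy : 0 ≤ y) (h : x^2 ≤ y^2) : x ≤ y := by
  have := Real.sqrt_le_sqrt h
  rwa [Real.sqrt_sq hx, Real.sqrt_sq hy] at this

lemma key_ineq (k : ℕ) (hk : 1 ≤ k) :
    ((k:ℝ)+2) * Real.sqrt ((k:ℝ)+1) + ((k:ℝ)+1) * Real.sqrt ((k:ℝ)+2)
      ≤ 2*((k:ℝ)+3) * Real.sqrt (k:ℝ) := by
  set a := Real.sqrt (k:ℝ) with ha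
  set b := Real.sqrt ((k:ℝ)+1) with hb
  set c := Real.sqrt ((k:ℝ)+2) with hc
  have hk0 : (0:ℝ) ≤ k := Nat.cast_nonneg k
  have ha2 : a^2 = k := Real.sq_sqrt hk0
  have hb2 : b^2 = (k:ℝ)+1 := Real.sq_sqrt (by linarith)
  have hc2 : c^2 = (k:ℝ)+2 := Real.sq_sqrt (by linarith)
  have han : 0 ≤ a := Real.sqrt_nonneg _
  have hbn : 0 ≤ b := Real.sqrt_nonneg _
  have hcn : 0 ≤ c := Real.sqrt_nonneg _
  have hk1 : (1:ℝ) ≤ k := by exact_mod_cast hk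
  have hapos : 0 < a := Real.sqrt_pos.2 (by linarith)
  have hab : a*b ≤ ((k:ℝ)+1/2) := by
    apply le_of_sq_le' (by positivity) (by linarith)
    rw [mul_pow, ha2, hb2]; nlinarith
  have hac : a*c ≤ ((k:ℝ)+1) := by
    apply le_of_sq_le' (by positivity) (by linarith)
    rw [mul_pow, ha2, hc2]; nlinarith
  rcases eq_or_lt_of_le hk1 with h1 | h2
  · -- k = 1
    have hk' : (k:ℝ) = 1 := h1.symm
    rw [hk'] at ha2 hb2 hc2 ⊢
    nlinarith [sq_nonneg (b - 17/12), sq_nonneg (c - 26/15), sq_nonneg (a-1), hb2, hc2, ha2, hbn, hcn, han]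
  · -- k ≥ 2
    have hk2 : (2:ℝ) ≤ k := by
      have : (1:ℕ) < k := by exact_mod_cast h2
      have : (2:ℕ) ≤ k := this
      exact_mod_cast this
    have key : a * (((k:ℝ)+2) * b + ((k:ℝ)+1) * c) ≤ a * (2*((k:ℝ)+3) * a) := by
      have e1 : a * (((k:ℝ)+2) * b + ((k:ℝ)+1) * c)
          = ((k:ℝ)+2)*(a*b) + ((k:ℝ)+1)*(a*c) := by ring
      have e2 : a * (2*((k:ℝ)+3) * a) = 2*((k:ℝ)+3)*a^2 := by ring
      rw [e1, e2, ha2]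
      nlinarith [hab, hac]
    exact le_of_mul_le_mul_left key hapos

lemma ratio_step : ∀ k : ℕ, Zseq (k+1) * Real.sqrt (k:ℝ) ≤ Zseq (k+2) * Real.sqrt ((k:ℝ)+1) := by
  intro k
  induction k with
  | zero =>
    simp only [Nat.cast_zero, Real.sqrt_zero, mul_zero, zero_add]
    exact le_of_lt (mul_pos (Zseq_pos 2) (by rw [Real.sqrt_one]; norm_num))
  | succ k ih =>
    -- goal: Zseq (k+2) * sqrt (k+1) ≤ Zseq (k+3) * sqrt (k+2)
    push_cast
    have e1 : k+1+1 = k+2 := rfl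
    have e2 : k+1+2 = k+3 := rfl
    rw [e1, e2]
    have ecast : ((k:ℝ)+1+1) = (k:ℝ)+2 := by ring
    rw [ecast]
    -- goal : Zseq (k+2) * sqrt (k+1) ≤ Zseq (k+3) * sqrt (k+2)
    rcases Nat.eq_zero_or_pos k with rfl | hk
    · -- k = 0 : Zseq 2 * 1 ≤ Zseq 3 * sqrt 2
      have hz2 : Zseq (0+2) = 3/4 := Zseq_two
      have hz3 : Zseq (0+3) = 7/12 := Zseq_three
      rw [hz2, hz3]
      have h1 : Real.sqrt ((0:ℕ):ℝ)  = 0 := by norm_num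
      have h2 : (((0:ℕ):ℝ)+1) = 1 := by norm_num
      have h3 : (((0:ℕ):ℝ)+2) = 2 := by norm_num
      rw [h2, h3, Real.sqrt_one]
      have hs2 : (Real.sqrt 2)^2 = 2 := Real.sq_sqrt (by norm_num)
      have hsn : 0 ≤ Real.sqrt 2 := Real.sqrt_nonneg 2
      nlinarith [sq_nonneg (Real.sqrt 2 - 3/2)]
    · -- k ≥ 1
      have hk1 : 1 ≤ k := hk
      set a := Real.sqrt (k:ℝ) with hA
      set b := Real.sqrt ((k:ℝ)+1) with hB
      set c := Real.sqrt ((k:ℝ)+2) with hC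
      have hk0 : (0:ℝ) ≤ k := Nat.cast_nonneg k
      have hk1' : (1:ℝ) ≤ k := by exact_mod_cast hk1
      have ha2 : a^2 = k := Real.sq_sqrt hk0
      have hb2 : b^2 = (k:ℝ)+1 := Real.sq_sqrt (by linarith)
      have hc2 : c^2 = (k:ℝ)+2 := Real.sq_sqrt (by linarith)
      have hapos : 0 < a := Real.sqrt_pos.2 (by linarith)
      have hbn : 0 ≤ b := Real.sqrt_nonneg _
      have hcn : 0 ≤ c := Real.sqrt_nonneg _
      have hcb : b ≤ c := Real.sqrt_le_sqrt (by linarith)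
      have hkey := key_ineq k hk1
      rw [← hA, ← hB, ← hC] at hkey
      -- bc ≤ 2(k+3) a (c - b)
      have hexp : (((k:ℝ)+2) * b + ((k:ℝ)+1) * c) * (c - b) = b*c := by
        linear_combination ((k:ℝ)+1)*hc2 - ((k:ℝ)+2)*hb2
      have hd : b*c ≤ 2*((k:ℝ)+3) * a * (c - b) := by
        have h1 := mul_le_mul_of_nonneg_right hkey (sub_nonneg.2 hcb)
        rw [hexp] at h1
        linarith [h1]
      -- recurrence
      have hrec := Zseq_rec (k+1)
      push_cast at hrec
      set Z1 := Zseq (k+1) with hZ1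
      set Z2 := Zseq (k+2) with hZ2
      set Z3 := Zseq (k+3) with hZ3
      have hZ1p : 0 < Z1 := Zseq_pos _
      have hZ2p : 0 < Z2 := Zseq_pos _
      have hP : Z1 * a ≤ Z2 * b := ih
      -- final : Z1 * c * a ≤ Z2 * (2(k+3) a (c-b))
      have final : Z1 * c * a ≤ Z2 * (2*((k:ℝ)+3) * a * (c - b)) := by
        calc Z1 * c * a = (Z1 * a) * c := by ring
          _ ≤ (Z2 * b) * c := by
              apply mul_le_mul_of_nonneg_right hP hcn
          _ = Z2 * (b * c) := by ring
          _ ≤ Z2 * (2*((k:ℝ)+3) * a * (c - b)) :=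
              mul_le_mul_of_nonneg_left hd (le_of_lt hZ2p)
      have hs : (0:ℝ) < 2*((k:ℝ)+3) := by linarith
      have key2 : Z1 * c / (2*((k:ℝ)+3)) ≤ Z2 * (c - b) := by
        rw [div_le_iff₀ hs]
        have := le_of_mul_le_mul_right (by linarith [final] :
          (Z1 * c) * a ≤ (Z2 * (c - b) * (2*((k:ℝ)+3))) * a) hapos
        linarith
      -- goal : Z2 * b ≤ Z3 * c with Z3 = Z2 - Z1/(2(k+3))
      have hZ3eq : Z3 = Z2 - Z1 / (2*((k:ℝ)+1+2)) := by
        rw [hZ3, hZ1, hZ2]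
        convert hrec using 3 <;> push_cast <;> ring
      have h1c : Z1 / (2*((k:ℝ)+1+2)) * c = Z1 * c / (2*((k:ℝ)+3)) := by
        ring
      rw [hZ3eq, sub_mul, h1c]
      nlinarith [key2, mul_le_mul_of_nonneg_left hcb (le_of_lt hZ2p)]

lemma chain (m : ℕ) : 3/4 ≤ Zseq (m+2) * Real.sqrt ((m:ℝ)+1) := by
  induction m with
  | zero =>
    rw [Zseq_two]
    norm_num [Real.sqrt_one]
  | succ m ih =>
    have h := ratio_step (m+1)
    have e1 : m+1+1 = m+2 := rfl
    rw [e1] at h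
    push_cast at h ⊢
    calc (3/4 : ℝ) ≤ Zseq (m+2) * Real.sqrt ((m:ℝ)+1) := ih
      _ ≤ Zseq (m+1+2) * Real.sqrt ((m:ℝ)+1+1) := h


end Aux

/-- for every `n ≥ 1`, `Z_n ≥ 1/sqrt 2 · 1/sqrt n`. -/
theorem Zseq_lower_bound (n : ℕ) (hn : 1 ≤ n) :
    1 / Real.sqrt 2 * (1 / Real.sqrt n) ≤ Zseq n := by
  match n, hn with
  | 1, _ =>
    rw [Zseq_one]
    have h1 : ((1:ℕ):ℝ) = 1 := by norm_num
    rw [h1, Real.sqrt_one]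
    have h2 : (1:ℝ) ≤ Real.sqrt 2 := by
      rw [show (1:ℝ) = Real.sqrt 1 from (Real.sqrt_one).symm]
      exact Real.sqrt_le_sqrt (by norm_num)
    have h3 : 0 < Real.sqrt 2 := by linarith
    have he : 1/Real.sqrt 2 * ((1:ℝ)/1) = 1/Real.sqrt 2 := by norm_num
    rw [he, div_le_one h3]
    exact h2
  | (m+2), _ =>
    have hch := chain m
    set Z := Zseq (m+2) with hZ
    set s := Real.sqrt 2 with hs
    set b := Real.sqrt ((m:ℝ)+1) with hb
    set c := Real.sqrt ((m:ℝ)+2) with hc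
    have hZp : 0 < Z := Zseq_pos _
    have hsn : 0 ≤ s := Real.sqrt_nonneg _
    have hbn : 0 ≤ b := Real.sqrt_nonneg _
    have hcn : 0 ≤ c := Real.sqrt_nonneg _
    have hs2 : s^2 = 2 := Real.sq_sqrt (by norm_num)
    have hb2 : b^2 = (m:ℝ)+1 := Real.sq_sqrt (by positivity)
    have hc2 : c^2 = (m:ℝ)+2 := Real.sq_sqrt (by positivity)
    have hcast : ((m+2:ℕ):ℝ) = (m:ℝ)+2 := by push_cast; ring
    rw [hcast]
    rw [← hc]
    have hkey2 : 4*b ≤ 3*(s*c) := by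
      apply le_of_sq_le' (by positivity) (by positivity)
      have e : (4*b)^2 = 16*(b^2) := by ring
      have e2 : (3*(s*c))^2 = 9*(s^2)*(c^2) := by ring
      rw [e, e2, hb2, hs2, hc2]
      have := Nat.cast_nonneg (α := ℝ) m
      nlinarith
    have hscpos : 0 < s*c := by
      have hs0 : 0 < s := Real.sqrt_pos.2 (by norm_num)
      have hc0 : 0 < c := Real.sqrt_pos.2 (by positivity)
      exact mul_pos hs0 hc0
    rw [div_mul_div_comm, one_mul, div_le_iff₀ hscpos]
    have p1 : Z*(4*b) ≤ Z*(3*(s*c)) := mul_le_mul_of_nonneg_left hkey2 (le_of_lt hZp)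
    nlinarith [hch, p1]
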